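/- For all real h and r, the derivative of Owen's T function with respect to h satisfies ∂T(h,r)/∂h = −φ(h) (Φ(rh) − 1/2), where T(h,r) = (1/(2π)) ∫_0^r e^{-h²(1+x²)/2}/(1+x²) dx. -/

import Mathlib

open Real MeasureTheory

/-- Owen's T function. -/
noncomputable def OwenT (h r : ℝ) : ℝ :=
  (1 / (2 * Real.pi)) * ∫ x in (0:ℝ)..r, Real.exp (-h ^ 2 * (1 + x ^ 2) / 2) / (1 + x ^ 2)

/-- Standard normal density. -/
noncomputable def stdPdf (t : ℝ) : ℝ := Real.exp (-t ^ 2 / 2) / Real.sqrt (2 * Real.pi)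

/-- Standard normal cdf. -/
noncomputable def stdCdf (x : ℝ) : ℝ := ∫ t in Set.Iic x, stdPdf t

/-!
Differentiate under the integral sign (the `h`-derivative of the integrand is bounded by
`|h| + 1` near `h`). The factor `1 / (1 + x²)` cancels, leaving
`-h e^{-h²/2} e^{-(hx)²/2} = -2π φ(h) · h φ(hx)`, and the substitution `t = hx` turns
`∫₀ʳ h φ(hx) dx` into `∫₀^{rh} φ = Φ(rh) - Φ(0)`, where `Φ(0) = 1/2` by the symmetry of `φ`.
-/

open Set intervalIntegral ProbabilityTheory

lemma stdPdf_eq_gaussianPDFReal : stdPdf = gaussianPDFReal 0 1 := by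
  ext t
  simp [stdPdf, gaussianPDFReal, div_eq_inv_mul]

lemma integrable_stdPdf : Integrable stdPdf :=
  stdPdf_eq_gaussianPDFReal ▸ integrable_gaussianPDFReal 0 1

lemma integral_stdPdf : ∫ t, stdPdf t = 1 :=
  stdPdf_eq_gaussianPDFReal ▸ integral_gaussianPDFReal_eq_one 0 one_ne_zero

lemma stdPdf_neg (t : ℝ) : stdPdf (-t) = stdPdf t := by
  simp [stdPdf]

lemma stdCdf_zero : stdCdf 0 = 1 / 2 := by
  have h_symm : ∫ t in Iic (0:ℝ), stdPdf t = ∫ t in Ioi (0:ℝ), stdPdf t := by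
    simpa [stdPdf_neg] using (integral_comp_neg_Ioi (0:ℝ) stdPdf).symm
  have h_split := integral_Iic_add_Ioi (b := (0:ℝ)) integrable_stdPdf.integrableOn
    integrable_stdPdf.integrableOn
  rw [integral_stdPdf, ← h_symm] at h_split
  rw [stdCdf]
  linarith

lemma stdCdf_sub_half (x : ℝ) : stdCdf x - 1 / 2 = ∫ t in (0:ℝ)..x, stdPdf t := by
  rw [← stdCdf_zero, stdCdf, stdCdf,
    integral_Iic_sub_Iic integrable_stdPdf.integrableOn integrable_stdPdf.integrableOn]

lemma stdPdf_mul_stdPdf (a b : ℝ) :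
    stdPdf a * stdPdf b = exp (-(a ^ 2 + b ^ 2) / 2) / (2 * π) := by
  rw [stdPdf, stdPdf, div_mul_div_comm, ← exp_add, mul_self_sqrt (by positivity)]
  ring_nf

lemma hasDerivAt_exp_neg_sq_mul_div (x h : ℝ) :
    HasDerivAt (fun h' => exp (-h' ^ 2 * (1 + x ^ 2) / 2) / (1 + x ^ 2))
      (-(h * exp (-h ^ 2 * (1 + x ^ 2) / 2))) h := by
  have h_exponent : HasDerivAt (fun h' : ℝ => -h' ^ 2 * (1 + x ^ 2) / 2)
      (-h * (1 + x ^ 2)) h := by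
    refine (((hasDerivAt_pow 2 h).neg.mul_const (1 + x ^ 2)).div_const 2).congr_deriv ?_
    push_cast
    ring
  refine (h_exponent.exp.div_const (1 + x ^ 2)).congr_deriv ?_
  field_simp

lemma norm_mul_exp_neg_sq_mul_le (x h : ℝ) : ‖h * exp (-h ^ 2 * (1 + x ^ 2) / 2)‖ ≤ |h| := by
  rw [norm_mul, norm_of_nonneg (exp_pos _).le, Real.norm_eq_abs]
  exact mul_le_of_le_one_right (abs_nonneg h) (exp_le_one_iff.mpr (by nlinarith [sq_nonneg h]))

lemma hasDerivAt_integral_exp_neg_sq_mul_div (a b h : ℝ) :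
    HasDerivAt (fun h' => ∫ x in a..b, exp (-h' ^ 2 * (1 + x ^ 2) / 2) / (1 + x ^ 2))
      (∫ x in a..b, -(h * exp (-h ^ 2 * (1 + x ^ 2) / 2))) h := by
  have h_cont : ∀ h' : ℝ, Continuous fun x : ℝ => exp (-h' ^ 2 * (1 + x ^ 2) / 2) / (1 + x ^ 2) :=
    fun h' => by fun_prop (disch := intro x; positivity)
  refine (hasDerivAt_integral_of_dominated_loc_of_deriv_le (bound := fun _ => |h| + 1)
    (Metric.ball_mem_nhds h one_pos) (.of_forall fun h' => (h_cont h').aestronglyMeasurable)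
    ((h_cont h).intervalIntegrable a b) (by fun_prop : Continuous _).aestronglyMeasurable
    (.of_forall fun x _ h' hh' => ?_) intervalIntegrable_const
    (.of_forall fun x _ h' _ => hasDerivAt_exp_neg_sq_mul_div x h')).2
  rw [norm_neg]
  refine (norm_mul_exp_neg_sq_mul_le x h').trans ?_
  rw [Metric.mem_ball, Real.dist_eq] at hh'
  linarith [abs_sub_abs_le_abs_sub h' h]

lemma integral_mul_exp_neg_sq_mul (h r : ℝ) :
    ∫ x in (0:ℝ)..r, h * exp (-h ^ 2 * (1 + x ^ 2) / 2)
      = 2 * π * stdPdf h * (stdCdf (r * h) - 1 / 2) := by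
  have h_factor : ∀ x : ℝ, h * exp (-h ^ 2 * (1 + x ^ 2) / 2)
      = 2 * π * stdPdf h * (h * stdPdf (h * x)) := by
    intro x
    rw [mul_left_comm, mul_assoc, stdPdf_mul_stdPdf]
    field_simp
  simp_rw [h_factor]
  rw [intervalIntegral.integral_const_mul, intervalIntegral.integral_const_mul,
    mul_integral_comp_mul_left, mul_zero, mul_comm h r, stdCdf_sub_half]

theorem OwenT_deriv (h r : ℝ) :
    HasDerivAt (fun h' => OwenT h' r) (-(stdPdf h) * (stdCdf (r * h) - 1 / 2)) h := by
  refine ((hasDerivAt_integral_exp_neg_sq_mul_div 0 r h).const_mul (1 / (2 * π))).congr_deriv ?_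
  rw [intervalIntegral.integral_neg, integral_mul_exp_neg_sq_mul]
  field_simp
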